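/- arXiv:1301.5078 — 7 statements merged into one kernel-verified Lean document; each statement's English description precedes it below -/
import Mathlib

section
/- Let γ>1 and C>0, and let α : ℕ → ℂ satisfy |α_n| ≤ C·exp(−n^γ) for all n ≥ 1. Then for every z ∈ ℂ there exists exactly one bounded sequence F(z,·) = (F₁(z,·),F₂(z,·)) : ℕ₀ → ℂ² satisfying the Volterra-type Jost equations: for all k ≥ 0 the series Σ_{n=k+1}^∞ α_n ζ_n(z) F₂(z,n) and Σ_{n=k+1}^∞ z^{n−k−1} conj(α_n) ζ_{k+1}(z) F₁(z,n) converge absolutely and F₁(z,k) = 1 − Σ_{n=k+1}^∞ α_n ζ_n(z) F₂(z,n), F₂(z,k) = − Σ_{n=k+1}^∞ z^{n−k−1} conj(α_n) ζ_{k+1}(z) F₁(z,n). -/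
open Complex Filter
open scoped ComplexConjugate Topology

noncomputable section

def cmvZeta (n : ℕ) (z : ℂ) : ℂ := if Odd n then z else 1

def enorm2 (v : ℂ × ℂ) : ℝ := Real.sqrt (‖v.1‖ ^ 2 + ‖v.2‖ ^ 2)

def IsJostSolution (α : ℕ → ℂ) (F : ℂ → ℕ → ℂ × ℂ) : Prop :=
  (∀ z : ℂ, ∃ M : ℝ, ∀ k : ℕ, enorm2 (F z k) ≤ M) ∧
  ∀ (z : ℂ) (k : ℕ),
    Summable (fun n : ℕ => ‖α (k + 1 + n) * cmvZeta (k + 1 + n) z * (F z (k + 1 + n)).2‖) ∧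
    Summable (fun n : ℕ => ‖z ^ n * conj (α (k + 1 + n)) * cmvZeta (k + 1) z * (F z (k + 1 + n)).1‖) ∧
    (F z k).1 = 1 - ∑' n : ℕ, α (k + 1 + n) * cmvZeta (k + 1 + n) z * (F z (k + 1 + n)).2 ∧
    (F z k).2 = - ∑' n : ℕ, z ^ n * conj (α (k + 1 + n)) * cmvZeta (k + 1) z * (F z (k + 1 + n)).1

def SuperExpDecay (γ C : ℝ) (α : ℕ → ℂ) : Prop :=
  ∀ n : ℕ, 1 ≤ n → ‖α n‖ ≤ C * Real.exp (-(n : ℝ) ^ γ)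

def MemB0 (γ C Q : ℝ) (α : ℕ → ℂ) : Prop :=
  (∀ k : ℕ, 1 ≤ k → ‖α k‖ < 1) ∧
  SuperExpDecay γ C α ∧
  1 / Q ≤ ∏' j : ℕ, (1 - ‖α (j + 1)‖)

def jostPi (F : ℂ → ℕ → ℂ × ℂ) (z : ℂ) : ℂ := (F z 0).1 - (F z 0).2

def HasZeroOrder (f : ℂ → ℂ) (w : ℂ) (m : ℕ) : Prop :=
  ∃ g : ℂ → ℂ, AnalyticAt ℂ g w ∧ g w ≠ 0 ∧ ∀ᶠ x in 𝓝 w, f x = (x - w) ^ m * g x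

def CMVStep (α : ℕ → ℂ) (z : ℂ) (k : ℕ) (prev cur : ℂ × ℂ) : Prop :=
  if Odd k then
    cur.1 = (α k * prev.1 + z * prev.2) / ((Real.sqrt (1 - ‖α k‖ ^ 2) : ℝ) : ℂ) ∧
    cur.2 = (prev.1 / z + conj (α k) * prev.2) / ((Real.sqrt (1 - ‖α k‖ ^ 2) : ℝ) : ℂ)
  else
    cur.1 = (conj (α k) * prev.1 + prev.2) / ((Real.sqrt (1 - ‖α k‖ ^ 2) : ℝ) : ℂ) ∧
    cur.2 = (prev.1 + α k * prev.2) / ((Real.sqrt (1 - ‖α k‖ ^ 2) : ℝ) : ℂ)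

end

/-!
With `R = max ‖z‖ 1` and `β m = ‖α m‖ * R ^ m`, both coefficients of the Jost equations are
bounded by `β (k + 1 + n)`, and super-exponential decay with `γ > 1` beats the geometric growth
of `R ^ m`, so `β` is summable. The Jost equations are therefore a discrete Volterra equation
`G k = g k + ∑' n, K k n (G (k + 1 + n))` with `‖K k n‖ ≤ β (k + 1 + n)`. In the sup norm
weighted by `w k = exp (2 ∑_{m > k} β m)` one has `∑_{m > k} β m * w m ≤ w k / 2` (telescoping
with `1 + x ≤ exp x`), so the Volterra map becomes a `1/2`-contraction; since `1 ≤ w ≤ w 0`,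
the bounded solutions are exactly its fixed points, and Banach's fixed point theorem gives
existence and uniqueness.
-/

open scoped BoundedContinuousFunction

noncomputable section

section Volterra

variable {E : Type*} [NormedAddCommGroup E] [NormedSpace ℝ E] {β : ℕ → ℝ}

def volterraWeight (β : ℕ → ℝ) (k : ℕ) : ℝ := Real.exp (2 * ∑' n, β (k + 1 + n))

lemma one_le_volterraWeight (hβ0 : ∀ n, 0 ≤ β n) (k : ℕ) : 1 ≤ volterraWeight β k :=
  Real.one_le_exp (mul_nonneg zero_le_two (tsum_nonneg fun _ => hβ0 _))

lemma volterraWeight_pos (k : ℕ) : 0 < volterraWeight β k := Real.exp_pos _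

lemma volterraWeight_eq_exp_mul (hβ : Summable β) (k : ℕ) :
    volterraWeight β k = Real.exp (2 * β (k + 1)) * volterraWeight β (k + 1) := by
  have hsplit := (hβ.comp_injective (add_right_injective (k + 1))).tsum_eq_zero_add
  simp only [Function.comp_apply] at hsplit
  rw [volterraWeight, volterraWeight, ← Real.exp_add, hsplit]
  ring_nf

lemma volterraWeight_antitone (hβ0 : ∀ n, 0 ≤ β n) (hβ : Summable β) :
    Antitone (volterraWeight β) :=
  antitone_nat_of_succ_le fun k => by
    rw [volterraWeight_eq_exp_mul hβ k]
    exact le_mul_of_one_le_left (volterraWeight_pos _).le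
      (Real.one_le_exp (mul_nonneg zero_le_two (hβ0 _)))

lemma two_mul_mul_volterraWeight_succ_le (hβ : Summable β) (k : ℕ) :
    2 * (β (k + 1) * volterraWeight β (k + 1)) ≤ volterraWeight β k - volterraWeight β (k + 1) := by
  have hexp := Real.add_one_le_exp (2 * β (k + 1))
  have hw := volterraWeight_pos (β := β) (k + 1)
  rw [volterraWeight_eq_exp_mul hβ k]
  nlinarith [mul_le_mul_of_nonneg_right hexp hw.le]

lemma sum_range_mul_volterraWeight_le (hβ : Summable β) (k m : ℕ) :
    ∑ n ∈ Finset.range m, β (k + 1 + n) * volterraWeight β (k + 1 + n) ≤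
      volterraWeight β k / 2 := by
  have hstep : ∀ n ∈ Finset.range m, β (k + 1 + n) * volterraWeight β (k + 1 + n) ≤
      (volterraWeight β (k + n) - volterraWeight β (k + n + 1)) / 2 := fun n _ => by
    have := two_mul_mul_volterraWeight_succ_le hβ (k + n)
    rw [show k + 1 + n = k + n + 1 by omega]
    linarith
  have htele := Finset.sum_range_sub' (fun n => volterraWeight β (k + n)) m
  simp only [← add_assoc, add_zero] at htele
  have := Finset.sum_le_sum hstep
  rw [← Finset.sum_div, htele] at this
  linarith [volterraWeight_pos (β := β) (k + m)]

lemma summable_mul_volterraWeight (hβ0 : ∀ n, 0 ≤ β n) (hβ : Summable β) (k : ℕ) :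
    Summable fun n => β (k + 1 + n) * volterraWeight β (k + 1 + n) :=
  summable_of_sum_range_le (fun _ => mul_nonneg (hβ0 _) (volterraWeight_pos _).le)
    (sum_range_mul_volterraWeight_le hβ k)

lemma tsum_mul_volterraWeight_le (hβ0 : ∀ n, 0 ≤ β n) (hβ : Summable β) (k : ℕ) :
    ∑' n, β (k + 1 + n) * volterraWeight β (k + 1 + n) ≤ volterraWeight β k / 2 :=
  Real.tsum_le_of_sum_range_le (fun _ => mul_nonneg (hβ0 _) (volterraWeight_pos _).le)
    (sum_range_mul_volterraWeight_le hβ k)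

variable {K : ℕ → ℕ → E →L[ℝ] E}

lemma summable_volterra_and_norm_tsum_le [CompleteSpace E] (hβ0 : ∀ n, 0 ≤ β n) (hβ : Summable β)
    (hK : ∀ k n, ‖K k n‖ ≤ β (k + 1 + n)) {k : ℕ} {φ : ℕ → E} {c : ℝ}
    (hφ : ∀ n, ‖φ n‖ ≤ volterraWeight β (k + 1 + n) * c) :
    Summable (fun n => K k n (φ n)) ∧ ‖∑' n, K k n (φ n)‖ ≤ volterraWeight β k / 2 * c := by
  have hc : 0 ≤ c :=
    nonneg_of_mul_nonneg_right ((norm_nonneg _).trans (hφ 0)) (volterraWeight_pos _)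
  have hbound : ∀ n, ‖K k n (φ n)‖ ≤ β (k + 1 + n) * volterraWeight β (k + 1 + n) * c := fun n => by
    rw [mul_assoc]; exact (K k n).le_of_opNorm_le_of_le (hK k n) (hφ n)
  have hsum := (summable_mul_volterraWeight hβ0 hβ k).mul_right c
  refine ⟨.of_norm_bounded hsum hbound, (tsum_of_norm_bounded hsum.hasSum hbound).trans ?_⟩
  rw [tsum_mul_right]
  exact mul_le_mul_of_nonneg_right (tsum_mul_volterraWeight_le hβ0 hβ k) hc

lemma norm_volterraWeight_smul_le (H : ℕ →ᵇ E) (j : ℕ) :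
    ‖volterraWeight β j • H j‖ ≤ volterraWeight β j * ‖H‖ := by
  rw [norm_smul, Real.norm_of_nonneg (volterraWeight_pos _).le]
  exact mul_le_mul_of_nonneg_left (H.norm_coe_le_norm j) (volterraWeight_pos _).le

/-- The Volterra map `G ↦ g + ∑' K G` conjugated by multiplication with `volterraWeight β`. -/
def weightedVolterra (β : ℕ → ℝ) (g : ℕ → E) (K : ℕ → ℕ → E →L[ℝ] E) (H : ℕ → E) (k : ℕ) : E :=
  (volterraWeight β k)⁻¹ • (g k + ∑' n, K k n (volterraWeight β (k + 1 + n) • H (k + 1 + n)))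

lemma weightedVolterra_eq_iff (g : ℕ → E) (H : ℕ → E) :
    weightedVolterra β g K H = H ↔ ∀ k, volterraWeight β k • H k =
      g k + ∑' n, K k n (volterraWeight β (k + 1 + n) • H (k + 1 + n)) := by
  simp only [funext_iff, weightedVolterra]
  exact forall_congr' fun k => by rw [inv_smul_eq_iff₀ (volterraWeight_pos k).ne', eq_comm]

variable [CompleteSpace E]

lemma norm_weightedVolterra_le (hβ0 : ∀ n, 0 ≤ β n) (hβ : Summable β)
    (hK : ∀ k n, ‖K k n‖ ≤ β (k + 1 + n)) {g : ℕ → E} {C : ℝ} (hg : ∀ k, ‖g k‖ ≤ C)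
    (H : ℕ →ᵇ E) (k : ℕ) :
    ‖weightedVolterra β g K H k‖ ≤ C + ‖H‖ := by
  have hw := one_le_volterraWeight hβ0 k
  have hS := (summable_volterra_and_norm_tsum_le hβ0 hβ hK
    (k := k) fun n => norm_volterraWeight_smul_le H _).2
  rw [weightedVolterra, norm_smul, Real.norm_of_nonneg (inv_nonneg.2 (by linarith))]
  calc (volterraWeight β k)⁻¹ * ‖g k + ∑' n, K k n (volterraWeight β (k + 1 + n) • H (k + 1 + n))‖
      ≤ (volterraWeight β k)⁻¹ * (‖g k‖ + volterraWeight β k / 2 * ‖H‖) :=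
        mul_le_mul_of_nonneg_left ((norm_add_le _ _).trans (add_le_add le_rfl hS))
          (inv_nonneg.2 (by linarith))
    _ = (volterraWeight β k)⁻¹ * ‖g k‖ + ‖H‖ / 2 := by field_simp
    _ ≤ C + ‖H‖ := by
        have := inv_le_one_of_one_le₀ hw
        nlinarith [norm_nonneg (g k), norm_nonneg H, hg k]

lemma dist_weightedVolterra_le (hβ0 : ∀ n, 0 ≤ β n) (hβ : Summable β)
    (hK : ∀ k n, ‖K k n‖ ≤ β (k + 1 + n)) (g : ℕ → E) (H H' : ℕ →ᵇ E) (k : ℕ) :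
    dist (weightedVolterra β g K H k) (weightedVolterra β g K H' k) ≤ 2⁻¹ * dist H H' := by
  have hw := volterraWeight_pos (β := β) k
  have hsum (H : ℕ →ᵇ E) := (summable_volterra_and_norm_tsum_le hβ0 hβ hK
    (k := k) fun n => norm_volterraWeight_smul_le H _).1
  have hdiff : ∀ n, ‖volterraWeight β (k + 1 + n) • (H - H') (k + 1 + n)‖ ≤
      volterraWeight β (k + 1 + n) * dist H H' := fun n => by
    rw [dist_eq_norm]; exact norm_volterraWeight_smul_le (H - H') _
  have hS := (summable_volterra_and_norm_tsum_le hβ0 hβ hK hdiff).2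
  rw [dist_eq_norm, weightedVolterra, weightedVolterra, ← smul_sub, add_sub_add_left_eq_sub,
    ← (hsum H).tsum_sub (hsum H'), norm_smul, Real.norm_of_nonneg (inv_nonneg.2 hw.le)]
  simp only [← map_sub, ← smul_sub]
  calc (volterraWeight β k)⁻¹ * _ ≤ (volterraWeight β k)⁻¹ * (volterraWeight β k / 2 * dist H H') :=
        mul_le_mul_of_nonneg_left hS (inv_nonneg.2 hw.le)
    _ = 2⁻¹ * dist H H' := by field_simp

theorem existsUnique_bounded_volterra (hβ0 : ∀ n, 0 ≤ β n) (hβ : Summable β)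
    (hK : ∀ k n, ‖K k n‖ ≤ β (k + 1 + n)) {g : ℕ → E} {C : ℝ} (hg : ∀ k, ‖g k‖ ≤ C) :
    ∃! G : ℕ → E, (∃ M, ∀ k, ‖G k‖ ≤ M) ∧ ∀ k, G k = g k + ∑' n, K k n (G (k + 1 + n)) := by
  let Φ : (ℕ →ᵇ E) → (ℕ →ᵇ E) := fun H =>
    .ofNormedAddCommGroupDiscrete _ _ (norm_weightedVolterra_le hβ0 hβ hK hg H)
  have hΦ : ContractingWith 2⁻¹ Φ := ⟨by norm_num, .of_dist_le_mul fun H H' =>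
    (BoundedContinuousFunction.dist_le (by positivity)).2
      (dist_weightedVolterra_le hβ0 hβ hK g H H')⟩
  have hfix : ∀ H, Φ H = H ↔ weightedVolterra β g K H = H := fun H => by
    simp only [Φ, BoundedContinuousFunction.ext_iff, funext_iff]; rfl
  set H₀ := hΦ.fixedPoint Φ
  refine ⟨fun k => volterraWeight β k • H₀ k, ⟨⟨volterraWeight β 0 * ‖H₀‖, fun k => ?_⟩, ?_⟩, ?_⟩
  · exact (norm_volterraWeight_smul_le H₀ k).trans (mul_le_mul_of_nonneg_right
      (volterraWeight_antitone hβ0 hβ k.zero_le) (norm_nonneg _))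
  · exact (weightedVolterra_eq_iff g H₀).1 ((hfix H₀).1 hΦ.fixedPoint_isFixedPt)
  · rintro G ⟨⟨M, hM⟩, hG⟩
    let H : ℕ →ᵇ E := .ofNormedAddCommGroupDiscrete (fun k => (volterraWeight β k)⁻¹ • G k) M
      fun k => by
        rw [norm_smul, Real.norm_of_nonneg (inv_nonneg.2 (volterraWeight_pos k).le)]
        exact (mul_le_of_le_one_left (norm_nonneg _)
          (inv_le_one_of_one_le₀ (one_le_volterraWeight hβ0 k))).trans (hM k)
    have hGH : ∀ k, volterraWeight β k • H k = G k := fun k =>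
      smul_inv_smul₀ (volterraWeight_pos k).ne' (G k)
    have hH : H = H₀ := hΦ.fixedPoint_unique ((hfix H).2 ((weightedVolterra_eq_iff g H).2
      fun k => by simp only [hGH]; exact hG k))
    funext k
    rw [← hGH, hH]

end Volterra

lemma SuperExpDecay.summable_mul_pow {γ C : ℝ} {α : ℕ → ℂ} (hα : SuperExpDecay γ C α) (hγ : 1 < γ)
    (r : ℝ) : Summable fun n => ‖α n‖ * r ^ n := by
  have hC : 0 ≤ C :=
    nonneg_of_mul_nonneg_left ((norm_nonneg _).trans (hα 1 le_rfl)) (Real.exp_pos _)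
  have hgrowth : ∀ᶠ n : ℕ in atTop, |r| + 1 ≤ (n : ℝ) ^ (γ - 1) :=
    ((tendsto_rpow_atTop (by linarith)).comp tendsto_natCast_atTop_atTop).eventually_ge_atTop _
  refine .of_norm_bounded_eventually_nat (Real.summable_exp_neg_nat.mul_left C) ?_
  filter_upwards [hgrowth, eventually_ge_atTop 1] with n hn hn1
  have hn0 : (0 : ℝ) ≤ n := n.cast_nonneg
  have hpow : (n : ℝ) * (|r| + 1) ≤ (n : ℝ) ^ γ := by
    calc (n : ℝ) * (|r| + 1) ≤ n * (n : ℝ) ^ (γ - 1) := mul_le_mul_of_nonneg_left hn hn0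
      _ = (n : ℝ) ^ γ := by
        rw [← Real.rpow_one_add' hn0 (by linarith)]; ring_nf
  have hr : |r| ^ n ≤ Real.exp (n * |r|) := by
    rw [Real.exp_nat_mul]
    exact pow_le_pow_left₀ (abs_nonneg r) ((le_add_of_nonneg_right zero_le_one).trans
      (Real.add_one_le_exp _)) n
  calc ‖‖α n‖ * r ^ n‖ = ‖α n‖ * |r| ^ n := by simp
    _ ≤ C * Real.exp (-(n : ℝ) ^ γ) * Real.exp (n * |r|) :=
        mul_le_mul (hα n hn1) hr (by positivity) (by positivity)
    _ ≤ C * Real.exp (-n) := by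
        rw [mul_assoc, ← Real.exp_add]
        gcongr
        linarith

lemma norm_cmvZeta_le (n : ℕ) (z : ℂ) : ‖cmvZeta n z‖ ≤ max ‖z‖ 1 := by
  unfold cmvZeta
  split_ifs
  · exact le_max_left _ _
  · simp

def jostKernel (α : ℕ → ℂ) (z : ℂ) (k n : ℕ) : ℂ × ℂ →L[ℝ] ℂ × ℂ :=
  ((-(α (k + 1 + n) * cmvZeta (k + 1 + n) z)) • ContinuousLinearMap.snd ℝ ℂ ℂ).prod
    ((-(z ^ n * conj (α (k + 1 + n)) * cmvZeta (k + 1) z)) • ContinuousLinearMap.fst ℝ ℂ ℂ)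

lemma jostKernel_apply (α : ℕ → ℂ) (z : ℂ) (k n : ℕ) (v : ℂ × ℂ) :
    jostKernel α z k n v = (-(α (k + 1 + n) * cmvZeta (k + 1 + n) z * v.2),
      -(z ^ n * conj (α (k + 1 + n)) * cmvZeta (k + 1) z * v.1)) := by
  simp [jostKernel]

lemma norm_jostKernel_le (α : ℕ → ℂ) (z : ℂ) (k n : ℕ) :
    ‖jostKernel α z k n‖ ≤ ‖α (k + 1 + n)‖ * max ‖z‖ 1 ^ (k + 1 + n) := by
  set R := max ‖z‖ 1
  have hR : 1 ≤ R := le_max_right _ _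
  have hA : ‖α (k + 1 + n) * cmvZeta (k + 1 + n) z‖ ≤ ‖α (k + 1 + n)‖ * R ^ (k + 1 + n) := by
    rw [norm_mul]
    exact mul_le_mul_of_nonneg_left ((norm_cmvZeta_le _ z).trans (le_self_pow₀ hR (by omega)))
      (norm_nonneg _)
  have hB : ‖z ^ n * conj (α (k + 1 + n)) * cmvZeta (k + 1) z‖ ≤
      ‖α (k + 1 + n)‖ * R ^ (k + 1 + n) := by
    rw [norm_mul, norm_mul, norm_pow, Complex.norm_conj]
    calc ‖z‖ ^ n * ‖α (k + 1 + n)‖ * ‖cmvZeta (k + 1) z‖ ≤ R ^ n * ‖α (k + 1 + n)‖ * R := by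
          gcongr
          · exact le_max_left _ _
          · exact norm_cmvZeta_le _ z
      _ = ‖α (k + 1 + n)‖ * R ^ (n + 1) := by ring
      _ ≤ ‖α (k + 1 + n)‖ * R ^ (k + 1 + n) :=
          mul_le_mul_of_nonneg_left (pow_le_pow_right₀ hR (by omega)) (norm_nonneg _)
  refine ContinuousLinearMap.opNorm_le_bound _ (by positivity) fun v => ?_
  rw [jostKernel_apply, Prod.norm_def, norm_neg, norm_neg]
  exact max_le
    (by rw [norm_mul]; exact mul_le_mul hA (norm_snd_le v) (norm_nonneg _) (by positivity))
    (by rw [norm_mul]; exact mul_le_mul hB (norm_fst_le v) (norm_nonneg _) (by positivity))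

lemma norm_le_enorm2 (v : ℂ × ℂ) : ‖v‖ ≤ enorm2 v := by
  rw [Prod.norm_def, enorm2]
  exact max_le (Real.le_sqrt_of_sq_le (by nlinarith [sq_nonneg ‖v.2‖]))
    (Real.le_sqrt_of_sq_le (by nlinarith [sq_nonneg ‖v.1‖]))

lemma enorm2_le_two_mul_norm (v : ℂ × ℂ) : enorm2 v ≤ 2 * ‖v‖ := by
  rw [enorm2, Real.sqrt_le_iff]
  have h₁ := norm_fst_le v
  have h₂ := norm_snd_le v
  exact ⟨by positivity, by nlinarith [norm_nonneg v.1, norm_nonneg v.2]⟩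

lemma exists_enorm2_le_iff_exists_norm_le (G : ℕ → ℂ × ℂ) :
    (∃ M, ∀ k, enorm2 (G k) ≤ M) ↔ ∃ M, ∀ k, ‖G k‖ ≤ M :=
  ⟨fun ⟨M, hM⟩ => ⟨M, fun k => (norm_le_enorm2 _).trans (hM k)⟩,
    fun ⟨M, hM⟩ => ⟨2 * M, fun k => (enorm2_le_two_mul_norm _).trans (by linarith [hM k])⟩⟩

lemma jost_equations_iff_volterra {α : ℕ → ℂ} {z : ℂ} (hβ : Summable fun m => ‖α m‖ * max ‖z‖ 1 ^ m)
    {G : ℕ → ℂ × ℂ} (hG : ∃ M, ∀ k, ‖G k‖ ≤ M) (k : ℕ) :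
    (Summable (fun n : ℕ => ‖α (k + 1 + n) * cmvZeta (k + 1 + n) z * (G (k + 1 + n)).2‖) ∧
      Summable (fun n : ℕ =>
        ‖z ^ n * conj (α (k + 1 + n)) * cmvZeta (k + 1) z * (G (k + 1 + n)).1‖) ∧
      (G k).1 = 1 - ∑' n : ℕ, α (k + 1 + n) * cmvZeta (k + 1 + n) z * (G (k + 1 + n)).2 ∧
      (G k).2 = - ∑' n : ℕ, z ^ n * conj (α (k + 1 + n)) * cmvZeta (k + 1) z * (G (k + 1 + n)).1) ↔
    G k = ((1 : ℂ), (0 : ℂ)) + ∑' n, jostKernel α z k n (G (k + 1 + n)) := by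
  obtain ⟨M, hM⟩ := hG
  have hbound (n : ℕ) : ‖jostKernel α z k n (G (k + 1 + n))‖ ≤
      ‖α (k + 1 + n)‖ * max ‖z‖ 1 ^ (k + 1 + n) * M :=
    (jostKernel α z k n).le_of_opNorm_le_of_le (norm_jostKernel_le α z k n) (hM _)
  have hsum := (hβ.comp_injective (add_right_injective (k + 1))).mul_right M
  have hS₁ : Summable fun n => ‖α (k + 1 + n) * cmvZeta (k + 1 + n) z * (G (k + 1 + n)).2‖ :=
    .of_nonneg_of_le (fun _ => norm_nonneg _) (fun n => by
      simpa [jostKernel_apply] using (norm_fst_le _).trans (hbound n)) hsum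
  have hS₂ : Summable fun n =>
      ‖z ^ n * conj (α (k + 1 + n)) * cmvZeta (k + 1) z * (G (k + 1 + n)).1‖ :=
    .of_nonneg_of_le (fun _ => norm_nonneg _) (fun n => by
      simpa [jostKernel_apply] using (norm_snd_le _).trans (hbound n)) hsum
  simp only [jostKernel_apply]
  rw [(hS₁.of_norm.neg.hasSum.prodMk hS₂.of_norm.neg.hasSum).tsum_eq]
  simp only [hS₁, hS₂, true_and, Prod.ext_iff, Prod.fst_add, Prod.snd_add, tsum_neg, zero_add,
    sub_eq_add_neg]

end

theorem jost_solution_exists_unique_general (γ C : ℝ) (hγ : 1 < γ)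
    (α : ℕ → ℂ) (hα : SuperExpDecay γ C α) (z : ℂ) :
    ∃! G : ℕ → ℂ × ℂ,
      (∃ M : ℝ, ∀ k : ℕ, enorm2 (G k) ≤ M) ∧
      ∀ k : ℕ,
        Summable (fun n : ℕ => ‖α (k + 1 + n) * cmvZeta (k + 1 + n) z * (G (k + 1 + n)).2‖) ∧
        Summable (fun n : ℕ => ‖z ^ n * conj (α (k + 1 + n)) * cmvZeta (k + 1) z * (G (k + 1 + n)).1‖) ∧
        (G k).1 = 1 - ∑' n : ℕ, α (k + 1 + n) * cmvZeta (k + 1 + n) z * (G (k + 1 + n)).2 ∧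
        (G k).2 = - ∑' n : ℕ, z ^ n * conj (α (k + 1 + n)) * cmvZeta (k + 1) z * (G (k + 1 + n)).1 := by
  have hβ := hα.summable_mul_pow hγ (max ‖z‖ 1)
  have hVolterra := existsUnique_bounded_volterra (fun m => by positivity) hβ
    (norm_jostKernel_le α z) (g := fun _ => ((1 : ℂ), (0 : ℂ))) fun _ => le_rfl
  refine (existsUnique_congr fun G => ?_).2 hVolterra
  rw [exists_enorm2_le_iff_exists_norm_le]
  exact and_congr_right fun hG => forall_congr' (jost_equations_iff_volterra hβ hG)

theorem jost_solution_exists_unique (γ C : ℝ) (hγ : 1 < γ) (hC : 0 < C)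
    (α : ℕ → ℂ) (hα : SuperExpDecay γ C α) (z : ℂ) :
    ∃! G : ℕ → ℂ × ℂ,
      (∃ M : ℝ, ∀ k : ℕ, enorm2 (G k) ≤ M) ∧
      ∀ k : ℕ,
        Summable (fun n : ℕ => ‖α (k + 1 + n) * cmvZeta (k + 1 + n) z * (G (k + 1 + n)).2‖) ∧
        Summable (fun n : ℕ => ‖z ^ n * conj (α (k + 1 + n)) * cmvZeta (k + 1) z * (G (k + 1 + n)).1‖) ∧
        (G k).1 = 1 - ∑' n : ℕ, α (k + 1 + n) * cmvZeta (k + 1 + n) z * (G (k + 1 + n)).2 ∧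
        (G k).2 = - ∑' n : ℕ, z ^ n * conj (α (k + 1 + n)) * cmvZeta (k + 1) z * (G (k + 1 + n)).1 :=
  jost_solution_exists_unique_general γ C hγ α hα z
end

section
/- Let γ>1, C>0, let α : ℕ → ℂ satisfy |α_n| ≤ C·exp(−n^γ) for all n ≥ 1, and let F be a Jost solution for α. Then for every z ∈ ℂ and every k ≥ 0, ‖F(z,k) − (1,0)‖ ≤ β(z,k)·exp(β(z,k)), where β(z,k) = Σ_{n=k+1}^∞ |α_n|·max{1,|z|^{2n−1}} (this series converges by the decay assumption). -/
open Complex Filter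
open scoped ComplexConjugate Topology

/-!
Write `w n = |α n| max(1, |z|^(2n-1))` and `β k = ∑_{n>k} w n`. Every term of the two series
defining `F(z, k) - (1, 0)` is bounded by `w n ‖F(z, n)‖`, so
`‖F(z, k) - (1, 0)‖ ≤ ∑_{n>k} w n ‖F(z, n)‖`. Hence the bounded sequence `‖F(z, k)‖` satisfies
`‖F(z, k)‖ ≤ 1 + ∑_{n>k} w n ‖F(z, n)‖`, and a discrete Gronwall argument gives
`‖F(z, k)‖ ≤ exp (β k)`. Feeding this back and telescoping,
`∑_{n>k} w n exp (β n) ≤ exp (β k) - 1 ≤ β k exp (β k)`.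
-/

open Finset

lemma pow_le_max_one_pow {r : ℝ} (hr : 0 ≤ r) {m m' : ℕ} (h : m ≤ m') : r ^ m ≤ max 1 (r ^ m') := by
  rcases le_total r 1 with hr1 | hr1
  · exact (pow_le_one₀ hr hr1).trans (le_max_left _ _)
  · exact (pow_le_pow_right₀ hr1 h).trans (le_max_right _ _)

lemma summable_pow_mul_exp_neg_rpow {γ : ℝ} (hγ : 1 < γ) {Q : ℝ} (hQ : 0 < Q) :
    Summable fun n : ℕ => Q ^ n * Real.exp (-(n : ℝ) ^ γ) := by
  refine Summable.of_norm_bounded_eventually_nat Real.summable_exp_neg_nat ?_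
  have hlarge : ∀ᶠ n : ℕ in atTop, Real.log Q + 1 ≤ (n : ℝ) ^ (γ - 1) :=
    ((tendsto_rpow_atTop (sub_pos.2 hγ)).comp tendsto_natCast_atTop_atTop).eventually_ge_atTop _
  filter_upwards [hlarge, eventually_ge_atTop 1] with n hn hn1
  have hn0 : (0 : ℝ) < n := by exact_mod_cast hn1
  have hpow : (n : ℝ) ^ γ = n * (n : ℝ) ^ (γ - 1) := by
    rw [Real.rpow_sub_one hn0.ne', mul_div_cancel₀ _ hn0.ne']
  rw [Real.norm_of_nonneg (by positivity), ← Real.exp_log (pow_pos hQ n), ← Real.exp_add,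
    Real.exp_le_exp, Real.log_pow, hpow]
  nlinarith

section TailSum

variable {a : ℕ → ℝ}

noncomputable def tailSum (a : ℕ → ℝ) (k : ℕ) : ℝ := ∑' n, a (k + 1 + n)

lemma tailSum_nonneg (ha0 : ∀ n, 0 ≤ a n) (k : ℕ) : 0 ≤ tailSum a k :=
  tsum_nonneg fun _ => ha0 _

lemma tailSum_le_tsum (ha0 : ∀ n, 0 ≤ a n) (ha : Summable a) (k : ℕ) : tailSum a k ≤ ∑' n, a n :=
  tsum_comp_le_tsum_of_inj ha ha0 (add_right_injective _)

lemma tailSum_eq_add (ha : Summable a) (k : ℕ) : tailSum a k = a (k + 1) + tailSum a (k + 1) := by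
  have h := (ha.comp_injective (add_right_injective (k + 1))).tsum_eq_zero_add
  simp only [Function.comp_apply, add_zero] at h
  rw [tailSum, h, tailSum]
  congr 2 with n
  congr 1
  omega

lemma sum_range_mul_exp_tailSum_le (ha : Summable a) (k N : ℕ) :
    ∑ n ∈ range N, a (k + 1 + n) * Real.exp (tailSum a (k + 1 + n)) ≤
      Real.exp (tailSum a k) - Real.exp (tailSum a (k + N)) := by
  induction N with
  | zero => simp
  | succ N ih =>
    -- `1 + a ≤ exp a` gives `a exp t ≤ exp (a + t) - exp t`, and `a + t` is the previous tail
    have hstep := Real.add_one_le_exp (a (k + N + 1))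
    have hexp := Real.exp_add (a (k + N + 1)) (tailSum a (k + N + 1))
    have hpos := Real.exp_pos (tailSum a (k + N + 1))
    rw [tailSum_eq_add ha (k + N)] at ih
    rw [sum_range_succ, ← add_assoc k N 1, add_right_comm k 1 N]
    nlinarith

lemma tsum_mul_le_of_le_exp_tailSum (ha0 : ∀ n, 0 ≤ a n) (ha : Summable a) {v : ℕ → ℝ} {S : ℝ}
    (hv0 : ∀ n, 0 ≤ v n) (hv : ∀ n, v n ≤ S * Real.exp (tailSum a n)) (k : ℕ) :
    ∑' n, a (k + 1 + n) * v (k + 1 + n) ≤ S * (Real.exp (tailSum a k) - 1) := by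
  have hS : 0 ≤ S := nonneg_of_mul_nonneg_left ((hv0 0).trans (hv 0)) (Real.exp_pos _)
  refine Real.tsum_le_of_sum_range_le (fun n => mul_nonneg (ha0 _) (hv0 _)) fun N => ?_
  calc ∑ n ∈ range N, a (k + 1 + n) * v (k + 1 + n)
      ≤ ∑ n ∈ range N, S * (a (k + 1 + n) * Real.exp (tailSum a (k + 1 + n))) := by
        refine sum_le_sum fun n _ => ?_
        rw [mul_left_comm]
        exact mul_le_mul_of_nonneg_left (hv _) (ha0 _)
    _ = S * ∑ n ∈ range N, a (k + 1 + n) * Real.exp (tailSum a (k + 1 + n)) := (mul_sum ..).symm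
    _ ≤ S * (Real.exp (tailSum a k) - Real.exp (tailSum a (k + N))) := by
        gcongr
        exact sum_range_mul_exp_tailSum_le ha k N
    _ ≤ S * (Real.exp (tailSum a k) - 1) := by
        gcongr
        exact Real.one_le_exp (tailSum_nonneg ha0 _)

/-- There is no initial value to induct from, so this is a contraction argument on
`S = max 1 (sup u e^{-tailSum a})`: the recursion improves the bound `u ≤ S e^{tailSum a}` to
`u e^{-tailSum a} ≤ S - (S - 1) e^{-∑ a}`, forcing `S = 1`. -/
theorem le_exp_tailSum_of_le_one_add_tsum (ha0 : ∀ n, 0 ≤ a n) (ha : Summable a) {u : ℕ → ℝ}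
    (hu0 : ∀ k, 0 ≤ u k) (hu : BddAbove (Set.range u))
    (hrec : ∀ k, u k ≤ 1 + ∑' n, a (k + 1 + n) * u (k + 1 + n)) (k : ℕ) :
    u k ≤ Real.exp (tailSum a k) := by
  set w : ℕ → ℝ := fun k => u k * Real.exp (-tailSum a k)
  obtain ⟨M, hM⟩ := hu
  have hw : BddAbove (Set.range w) := by
    refine ⟨M, ?_⟩
    rintro _ ⟨k, rfl⟩
    refine (mul_le_of_le_one_right (hu0 k) ?_).trans (hM ⟨k, rfl⟩)
    exact Real.exp_le_one_iff.2 (neg_nonpos.2 (tailSum_nonneg ha0 k))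
  set S := max 1 (⨆ k, w k)
  have hexp_cancel : ∀ k, Real.exp (tailSum a k) * Real.exp (-tailSum a k) = 1 := fun k => by
    rw [← Real.exp_add, add_neg_cancel, Real.exp_zero]
  have huS : ∀ k, u k ≤ S * Real.exp (tailSum a k) := fun k => by
    have : w k ≤ S := (le_ciSup hw k).trans (le_max_right _ _)
    calc u k = w k * Real.exp (tailSum a k) := by
          rw [mul_assoc, mul_comm (Real.exp _), hexp_cancel, mul_one]
      _ ≤ S * Real.exp (tailSum a k) := by gcongr
  set B := ∑' n, a n
  have hwS : ∀ k, w k ≤ S - (S - 1) * Real.exp (-B) := fun k => by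
    have hrec' := (hrec k).trans
      (add_le_add_right (tsum_mul_le_of_le_exp_tailSum ha0 ha hu0 huS k) 1)
    have hB : Real.exp (-B) ≤ Real.exp (-tailSum a k) :=
      Real.exp_le_exp.2 (neg_le_neg (tailSum_le_tsum ha0 ha k))
    have hS1 : 1 ≤ S := le_max_left _ _
    have := hexp_cancel k
    have := Real.exp_pos (-tailSum a k)
    simp only [w]
    nlinarith
  have hS : S ≤ S - (S - 1) * Real.exp (-B) := by
    refine max_le ?_ (ciSup_le hwS)
    have : Real.exp (-B) ≤ 1 := Real.exp_le_one_iff.2 (neg_nonpos.2 (tsum_nonneg ha0))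
    nlinarith [le_max_left 1 (⨆ k, w k)]
  have hS1 : S ≤ 1 := by nlinarith [Real.exp_pos (-B)]
  calc u k ≤ S * Real.exp (tailSum a k) := huS k
    _ ≤ Real.exp (tailSum a k) := mul_le_of_le_one_left (Real.exp_pos _).le hS1

end TailSum

section Enorm2

lemma enorm2_eq_norm_toLp (v : ℂ × ℂ) : enorm2 v = ‖WithLp.toLp 2 v‖ :=
  (WithLp.prod_norm_eq_of_L2 _).symm

lemma enorm2_neg (x y : ℂ) : enorm2 (-x, -y) = enorm2 (x, y) := by
  simp only [enorm2, norm_neg]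

lemma enorm2_swap (v : ℂ × ℂ) : enorm2 v.swap = enorm2 v := by
  simp only [enorm2, Prod.fst_swap, Prod.snd_swap, add_comm]

lemma enorm2_le_mul_of_le {v w : ℂ × ℂ} {c : ℝ} (hc : 0 ≤ c) (h₁ : ‖v.1‖ ≤ c * ‖w.1‖)
    (h₂ : ‖v.2‖ ≤ c * ‖w.2‖) : enorm2 v ≤ c * enorm2 w := by
  rw [enorm2, enorm2, ← Real.sqrt_sq hc, ← Real.sqrt_mul (sq_nonneg c)]
  apply Real.sqrt_le_sqrt
  calc ‖v.1‖ ^ 2 + ‖v.2‖ ^ 2 ≤ (c * ‖w.1‖) ^ 2 + (c * ‖w.2‖) ^ 2 := by gcongr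
    _ = c ^ 2 * (‖w.1‖ ^ 2 + ‖w.2‖ ^ 2) := by ring

lemma enorm2_le_one_add (v : ℂ × ℂ) : enorm2 v ≤ 1 + enorm2 (v.1 - 1, v.2) := by
  have hv : WithLp.toLp 2 v = WithLp.toLp 2 ((1 : ℂ), (0 : ℂ)) + WithLp.toLp 2 (v.1 - 1, v.2) := by
    rw [← WithLp.toLp_add, Prod.mk_add_mk, add_sub_cancel, zero_add]
  have hone : enorm2 ((1 : ℂ), (0 : ℂ)) = 1 := by simp [enorm2]
  rw [enorm2_eq_norm_toLp, hv, ← hone, enorm2_eq_norm_toLp, enorm2_eq_norm_toLp]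
  exact norm_add_le _ _

lemma enorm2_tsum_le_of_le {ι : Type*} {f g : ι → ℂ} {c : ι → ℝ} (hf : Summable f)
    (hg : Summable g) (hc : Summable c) (h : ∀ i, enorm2 (f i, g i) ≤ c i) :
    enorm2 (∑' i, f i, ∑' i, g i) ≤ ∑' i, c i := by
  let e := (WithLp.prodContinuousLinearEquiv 2 ℝ ℂ ℂ).symm
  rw [← (hf.hasSum.prodMk hg.hasSum).tsum_eq, enorm2_eq_norm_toLp]
  change ‖e (∑' i, (f i, g i))‖ ≤ _
  rw [e.map_tsum]
  exact tsum_of_norm_bounded hc.hasSum fun i => (enorm2_eq_norm_toLp _).symm.trans_le (h i)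

end Enorm2

section Jost

variable {α : ℕ → ℂ} {z : ℂ}

/-- Its tails `tailSum (jostWeight α z) k` are the paper's `β(z, k)`. -/
noncomputable def jostWeight (α : ℕ → ℂ) (z : ℂ) (n : ℕ) : ℝ := ‖α n‖ * max 1 (‖z‖ ^ (2 * n - 1))

lemma jostWeight_nonneg (n : ℕ) : 0 ≤ jostWeight α z n :=
  mul_nonneg (norm_nonneg _) (le_max_of_le_left zero_le_one)

lemma summable_jostWeight {γ C : ℝ} (hγ : 1 < γ) (hα : SuperExpDecay γ C α) (z : ℂ) :
    Summable (jostWeight α z) := by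
  set R := max 1 ‖z‖
  have hQ : 0 < R ^ 2 := by positivity
  refine Summable.of_norm_bounded_eventually_nat
    ((summable_pow_mul_exp_neg_rpow hγ hQ).mul_left C) ?_
  filter_upwards [eventually_ge_atTop 1] with n hn
  have hmax : max 1 (‖z‖ ^ (2 * n - 1)) ≤ (R ^ 2) ^ n := by
    rw [← pow_mul]
    refine max_le (one_le_pow₀ (le_max_left _ _)) ?_
    exact (pow_le_pow_left₀ (norm_nonneg z) (le_max_right _ _) _).trans
      (pow_le_pow_right₀ (le_max_left _ _) (Nat.sub_le _ _))
  rw [Real.norm_of_nonneg (jostWeight_nonneg n), jostWeight]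
  calc ‖α n‖ * max 1 (‖z‖ ^ (2 * n - 1)) ≤ ‖α n‖ * (R ^ 2) ^ n := by gcongr
    _ ≤ C * Real.exp (-(n : ℝ) ^ γ) * (R ^ 2) ^ n := by gcongr; exact hα n hn
    _ = C * ((R ^ 2) ^ n * Real.exp (-(n : ℝ) ^ γ)) := by ring

lemma norm_pow_mul_cmvZeta_le (z : ℂ) {n m : ℕ} (j : ℕ) (h : n + 1 ≤ m) :
    ‖z ^ n * cmvZeta j z‖ ≤ max 1 (‖z‖ ^ m) := by
  unfold cmvZeta
  split_ifs
  · rw [norm_mul, norm_pow, ← pow_succ]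
    exact pow_le_max_one_pow (norm_nonneg z) h
  · rw [mul_one, norm_pow]
    exact pow_le_max_one_pow (norm_nonneg z) (by omega)

lemma norm_mul_cmvZeta_mul_le {N : ℕ} (hN : 1 ≤ N) (x : ℂ) :
    ‖α N * cmvZeta N z * x‖ ≤ jostWeight α z N * ‖x‖ := by
  have hζ := norm_pow_mul_cmvZeta_le z (n := 0) N (m := 2 * N - 1) (by omega)
  rw [pow_zero, one_mul] at hζ
  rw [norm_mul, norm_mul, jostWeight]
  gcongr

lemma norm_pow_mul_conj_mul_cmvZeta_mul_le (k n : ℕ) (x : ℂ) :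
    ‖z ^ n * conj (α (k + 1 + n)) * cmvZeta (k + 1) z * x‖ ≤ jostWeight α z (k + 1 + n) * ‖x‖ := by
  calc ‖z ^ n * conj (α (k + 1 + n)) * cmvZeta (k + 1) z * x‖
      = ‖α (k + 1 + n)‖ * ‖z ^ n * cmvZeta (k + 1) z‖ * ‖x‖ := by
        simp only [norm_mul, Complex.norm_conj]
        ring
    _ ≤ jostWeight α z (k + 1 + n) * ‖x‖ := by
        rw [jostWeight]
        gcongr
        exact norm_pow_mul_cmvZeta_le z _ (by omega)

variable {F : ℂ → ℕ → ℂ × ℂ}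

lemma IsJostSolution.enorm2_sub_le_tsum (hF : IsJostSolution α F)
    (hw : Summable (jostWeight α z)) (k : ℕ) :
    enorm2 ((F z k).1 - 1, (F z k).2) ≤
      ∑' n, jostWeight α z (k + 1 + n) * enorm2 (F z (k + 1 + n)) := by
  obtain ⟨M, hM⟩ := hF.1 z
  obtain ⟨hs₁, hs₂, hF₁, hF₂⟩ := hF.2 z k
  have hsum : Summable fun n => jostWeight α z (k + 1 + n) * enorm2 (F z (k + 1 + n)) :=
    Summable.of_nonneg_of_le (fun n => mul_nonneg (jostWeight_nonneg _) (Real.sqrt_nonneg _))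
      (fun n => mul_le_mul_of_nonneg_left (hM _) (jostWeight_nonneg _))
      ((hw.comp_injective (add_right_injective (k + 1))).mul_right M)
  rw [hF₁, hF₂, sub_sub_cancel_left, enorm2_neg]
  refine enorm2_tsum_le_of_le hs₁.of_norm hs₂.of_norm hsum fun n => ?_
  rw [← enorm2_swap (F z (k + 1 + n))]
  exact enorm2_le_mul_of_le (jostWeight_nonneg _) (norm_mul_cmvZeta_mul_le (by omega) _)
    (norm_pow_mul_conj_mul_cmvZeta_mul_le k n _)

lemma IsJostSolution.enorm2_le_exp_tailSum (hF : IsJostSolution α F)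
    (hw : Summable (jostWeight α z)) (k : ℕ) :
    enorm2 (F z k) ≤ Real.exp (tailSum (jostWeight α z) k) := by
  refine le_exp_tailSum_of_le_one_add_tsum (u := fun k => enorm2 (F z k)) jostWeight_nonneg hw
    (fun _ => Real.sqrt_nonneg _) ?_
    (fun k => (enorm2_le_one_add _).trans (add_le_add_right (hF.enorm2_sub_le_tsum hw k) 1)) k
  obtain ⟨M, hM⟩ := hF.1 z
  exact ⟨M, by rintro _ ⟨k, rfl⟩; exact hM k⟩

end Jost

theorem jost_solution_estimate_general (γ C : ℝ) (hγ : 1 < γ)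
    (α : ℕ → ℂ) (hα : SuperExpDecay γ C α)
    (F : ℂ → ℕ → ℂ × ℂ) (hF : IsJostSolution α F) (z : ℂ) (k : ℕ) :
    enorm2 ((F z k).1 - 1, (F z k).2) ≤
      (∑' n : ℕ, ‖α (k + 1 + n)‖ * max 1 (‖z‖ ^ (2 * (k + 1 + n) - 1))) *
        Real.exp (∑' n : ℕ, ‖α (k + 1 + n)‖ * max 1 (‖z‖ ^ (2 * (k + 1 + n) - 1))) := by
  have hw := summable_jostWeight hγ hα z
  set β := tailSum (jostWeight α z) k
  calc enorm2 ((F z k).1 - 1, (F z k).2)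
      ≤ ∑' n, jostWeight α z (k + 1 + n) * enorm2 (F z (k + 1 + n)) := hF.enorm2_sub_le_tsum hw k
    _ ≤ 1 * (Real.exp β - 1) :=
        tsum_mul_le_of_le_exp_tailSum (v := fun n => enorm2 (F z n)) jostWeight_nonneg hw
          (fun _ => Real.sqrt_nonneg _) (fun n => by simpa using hF.enorm2_le_exp_tailSum hw n) k
    _ ≤ β * Real.exp β := by
        have := Real.one_sub_le_exp_neg β
        have := Real.exp_pos β
        have := Real.exp_add β (-β)
        rw [add_neg_cancel, Real.exp_zero] at this
        nlinarith

theorem jost_solution_estimate (γ C : ℝ) (hγ : 1 < γ) (hC : 0 < C)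
    (α : ℕ → ℂ) (hα : SuperExpDecay γ C α)
    (F : ℂ → ℕ → ℂ × ℂ) (hF : IsJostSolution α F) (z : ℂ) (k : ℕ) :
    enorm2 ((F z k).1 - 1, (F z k).2) ≤
      (∑' n : ℕ, ‖α (k + 1 + n)‖ * max 1 (‖z‖ ^ (2 * (k + 1 + n) - 1))) *
        Real.exp (∑' n : ℕ, ‖α (k + 1 + n)‖ * max 1 (‖z‖ ^ (2 * (k + 1 + n) - 1))) :=
  jost_solution_estimate_general γ C hγ α hα F hF z k
end

section
/- Let L > 0 and Q > 0, and let f be analytic on the open disk {z ∈ ℂ : |z| < e} with |f(z)| ≤ L for all |z| < e. Suppose |f(z₀)| ≥ 1/Q for every z₀ with |z₀| = 1. Then f(z) ≠ 0 whenever 1 ≤ |z| < 1 + (e−1)/(QL+1). -/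
/-!
By Cauchy's estimate on discs of radius `e - r` centred in the closed disc of radius `r = ‖z‖`,
`‖f'‖ ≤ L / (e - r)` there. The mean value inequality along the segment from `z / r` to `z`
then shows that a zero at `z` forces `1 / Q ≤ ‖f (z / r)‖ ≤ L (r - 1) / (e - r)`, i.e.
`e - r ≤ Q L (r - 1)`, which is exactly what the bound on `r` excludes.
-/

open Complex Filter
open scoped ComplexConjugate Topology

open Metric

section CauchyEstimate

variable {F : Type*} [NormedAddCommGroup F] [NormedSpace ℂ F] {f : ℂ → F} {c : ℂ} {R C : ℝ}

theorem norm_deriv_le_of_forall_mem_ball_norm_le (hR : 0 < R)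
    (hd : DifferentiableOn ℂ f (ball c R)) (hC : ∀ z ∈ ball c R, ‖f z‖ ≤ C) :
    ‖deriv f c‖ ≤ C / R := by
  have hlim : Tendsto (fun ρ => C / ρ) (𝓝[<] R) (𝓝 (C / R)) :=
    (continuousAt_const.div continuousAt_id hR.ne').tendsto.mono_left nhdsWithin_le_nhds
  refine ge_of_tendsto hlim ?_
  filter_upwards [Ioo_mem_nhdsLT hR] with ρ ⟨hρ0, hρR⟩
  have hsub : closedBall c ρ ⊆ ball c R := closedBall_subset_ball hρR
  refine Complex.norm_deriv_le_of_forall_mem_sphere_norm_le hρ0 ?_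
    fun z hz => hC z (hsub (sphere_subset_closedBall hz))
  exact (hd.mono ((closure_ball c hρ0.ne').subset.trans hsub)).diffContOnCl

theorem norm_sub_le_of_forall_mem_ball_norm_le {r : ℝ} (hr : r < R)
    (hd : DifferentiableOn ℂ f (ball c R)) (hC : ∀ z ∈ ball c R, ‖f z‖ ≤ C)
    {z w : ℂ} (hz : z ∈ closedBall c r) (hw : w ∈ closedBall c r) :
    ‖f z - f w‖ ≤ C / (R - r) * ‖z - w‖ := by
  have hball : ∀ x ∈ closedBall c r, ball x (R - r) ⊆ ball c R := fun x hx =>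
    ball_subset_ball' (by rw [mem_closedBall] at hx; linarith)
  refine (convex_closedBall c r).norm_image_sub_le_of_norm_deriv_le
    (fun x hx => hd.differentiableAt (isOpen_ball.mem_nhds (closedBall_subset_ball hr hx)))
    (fun x hx => ?_) hw hz
  exact norm_deriv_le_of_forall_mem_ball_norm_le (sub_pos.2 hr) (hd.mono (hball x hx))
    fun y hy => hC y (hball x hx hy)

end CauchyEstimate

theorem norm_sub_inv_norm_smul_self {E : Type*} [NormedAddCommGroup E] [NormedSpace ℝ E]
    {x : E} (hx : x ≠ 0) : ‖x - ‖x‖⁻¹ • x‖ = |‖x‖ - 1| := by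
  rw [show x - ‖x‖⁻¹ • x = (1 - ‖x‖⁻¹) • x by rw [sub_smul, one_smul], norm_smul,
    Real.norm_eq_abs, ← abs_norm x, ← abs_mul, abs_norm, sub_mul, one_mul,
    inv_mul_cancel₀ (norm_ne_zero_iff.2 hx)]

theorem no_zeros_in_annulus (L Q : ℝ) (hL : 0 < L) (hQ : 0 < Q) (f : ℂ → ℂ)
    (hf : DifferentiableOn ℂ f (Metric.ball (0 : ℂ) (Real.exp 1)))
    (hbd : ∀ z : ℂ, ‖z‖ < Real.exp 1 → ‖f z‖ ≤ L)
    (hlow : ∀ z : ℂ, ‖z‖ = 1 → 1 / Q ≤ ‖f z‖) :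
    ∀ z : ℂ, 1 ≤ ‖z‖ → ‖z‖ < 1 + (Real.exp 1 - 1) / (Q * L + 1) →
      f z ≠ 0 := by
  intro z hz1 hze hfz
  set r := ‖z‖
  have hgap : Q * L * (r - 1) < Real.exp 1 - r := by
    have := (lt_div_iff₀ (by positivity)).1 (sub_lt_iff_lt_add'.2 hze)
    linarith
  have hre : r < Real.exp 1 := by nlinarith [mul_pos hQ hL]
  have hz0 : z ≠ 0 := norm_pos_iff.1 (one_pos.trans_le hz1)
  obtain ⟨z₀, hz₀, hdist⟩ : ∃ z₀ : ℂ, ‖z₀‖ = 1 ∧ ‖z₀ - z‖ = r - 1 :=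
    ⟨‖z‖⁻¹ • z, norm_smul_inv_norm (𝕜 := ℝ) hz0, by
      rw [norm_sub_rev, norm_sub_inv_norm_smul_self hz0, abs_of_nonneg (sub_nonneg.2 hz1)]⟩
  have hlip := norm_sub_le_of_forall_mem_ball_norm_le hre hf
    (fun y hy => hbd y (mem_ball_zero_iff.1 hy))
    (mem_closedBall_zero_iff.2 (hz₀.trans_le hz1)) (mem_closedBall_zero_iff.2 le_rfl)
  rw [hfz, sub_zero, hdist] at hlip
  have hbound : 1 / Q ≤ L / (Real.exp 1 - r) * (r - 1) := (hlow z₀ hz₀).trans hlip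
  rw [div_mul_eq_mul_div, div_le_div_iff₀ hQ (sub_pos.2 hre)] at hbound
  linarith
end

section
/- Let p ≥ 1 and B ≥ 0. There exists a constant A₁ ≥ 0, depending only on p and B, such that for every entire function f with f(0) = 1 and log|f(z)| ≤ B + (log(2|z|²))^p for all |z| ≥ 1, and for every r ≥ 1, the number of zeros of f (counted with multiplicities) in the open disk {z : |z| < r} is at most A₁ + (log(r⁴))^p / 2. -/
open Complex Filter
open scoped ComplexConjugate Topology

/-!
Jensen's inequality between the circles of radii `s = max r r₀` and `e² s` bounds the number of
zeros of `f` in the closed disk of radius `s`, counted with multiplicity, by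
`(log max_{|z| = e² s} |f z| - log |f 0|) / log e² ≤ (B + (log (2 e⁴ s²)) ^ p) / 2`,
and `2 e⁴ s² ≤ s⁴` as soon as `s ≥ r₀ = 2 e⁴`. The multiplicity hypothesis says precisely that
the listed zeros form a sub-multiset of the divisor of `f`.
-/

open Metric MeromorphicOn Finset

theorem HasZeroOrder.analyticOrderAt_eq {f : ℂ → ℂ} {w : ℂ} {m : ℕ} (h : HasZeroOrder f w m) :
    analyticOrderAt f w = m := by
  obtain ⟨g, hg, hgw, hfg⟩ := h
  have hprod : AnalyticAt ℂ (fun z => (z - w) ^ m * g z) w := by fun_prop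
  rw [analyticOrderAt_congr hfg, hprod.analyticOrderAt_eq_natCast]
  exact ⟨g, hg, hgw, .of_forall fun _ => rfl⟩

theorem AnalyticOnNhd.card_le_finsum_divisor {𝕜 E ι : Type*} [NontriviallyNormedField 𝕜]
    [NormedAddCommGroup E] [NormedSpace 𝕜 E] [Fintype ι] [DecidableEq 𝕜]
    {f : 𝕜 → E} {U : Set 𝕜} (hf : AnalyticOnNhd 𝕜 f U) (hU : IsCompact U)
    (zs : ι → 𝕜) (hzs : ∀ i, zs i ∈ U)
    (hmult : ∀ w, #{i | zs i = w} ≤ (analyticOrderAt f w).toNat) :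
    (Fintype.card ι : ℤ) ≤ ∑ᶠ u, divisor f U u := by
  set S := univ.image zs
  have hsupp := (divisor f U).finiteSupport hU
  calc (Fintype.card ι : ℤ) = ∑ w ∈ S, (#{i | zs i = w} : ℤ) := by
        rw [← card_univ, card_eq_sum_card_image zs]; push_cast; rfl
    _ ≤ ∑ w ∈ S, divisor f U w := by
        refine sum_le_sum fun w hw => ?_
        obtain ⟨i, -, rfl⟩ := mem_image.mp hw
        rw [hf.divisor_apply (hzs i)]
        refine (Nat.cast_le.mpr (hmult (zs i))).trans_eq ?_
        cases analyticOrderAt f (zs i) <;> simp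
    _ ≤ ∑ w ∈ S ∪ hsupp.toFinset, divisor f U w :=
        sum_le_sum_of_subset_of_nonneg subset_union_left
          fun w _ _ => hf.divisor_nonneg w
    _ = ∑ᶠ u, divisor f U u :=
        (finsum_eq_sum_of_support_subset _ (by simp)).symm

theorem AnalyticOnNhd.card_le_log_div_log {f : ℂ → ℂ} {s R M : ℝ} (hs : 0 < s) (hsR : s < R)
    (hM : 1 ≤ M) (hf : AnalyticOnNhd ℂ f (closedBall 0 R)) (hf0 : f 0 ≠ 0)
    (hbound : ∀ z ∈ sphere (0 : ℂ) R, ‖f z‖ ≤ M) {ι : Type*} [Fintype ι] (zs : ι → ℂ)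
    (hzs : ∀ i, ‖zs i‖ ≤ s) (hmult : ∀ w, #{i | zs i = w} ≤ (analyticOrderAt f w).toNat) :
    (Fintype.card ι : ℝ) ≤ Real.log (M / ‖f 0‖) / Real.log (R / s) := by
  have hR : |R| = R := abs_of_pos (hs.trans hsR)
  have hs' : |s| = s := abs_of_pos hs
  have jensen := AnalyticOnNhd.sum_divisor_le (c := 0) (r := s) (R := R) (by rwa [hs'])
    (by rwa [hs', hR]) hM (by rwa [hR]) hf0 (by rwa [hR])
  have hcount := (hf.mono (closedBall_subset_closedBall hsR.le)).card_le_finsum_divisor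
    (isCompact_closedBall 0 s) zs (by simpa using hzs) hmult
  rw [hs'] at jensen
  exact (Int.cast_le.mpr hcount).trans jensen

theorem card_le_div_log_of_log_norm_le {f : ℂ → ℂ} {s R c : ℝ} (hs : 0 < s) (hsR : s < R)
    (hc : 0 ≤ c) (hf : AnalyticOnNhd ℂ f (closedBall 0 R)) (hf0 : f 0 = 1)
    (hbound : ∀ z : ℂ, ‖z‖ = R → Real.log ‖f z‖ ≤ c) {ι : Type*} [Fintype ι] (zs : ι → ℂ)
    (hzs : ∀ i, ‖zs i‖ ≤ s) (hmult : ∀ w, #{i | zs i = w} ≤ (analyticOrderAt f w).toNat) :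
    (Fintype.card ι : ℝ) ≤ c / Real.log (R / s) := by
  have hnorm : ∀ z ∈ sphere (0 : ℂ) R, ‖f z‖ ≤ Real.exp c := fun z hz =>
    (Real.le_exp_log _).trans (Real.exp_le_exp.mpr (hbound z (by simpa using hz)))
  simpa [hf0] using AnalyticOnNhd.card_le_log_div_log hs hsR (Real.one_le_exp hc) hf
    (by simp [hf0]) hnorm zs hzs hmult

theorem rpow_log_nonneg {x : ℝ} (hx : 1 ≤ x) (p : ℝ) : 0 ≤ Real.log x ^ p :=
  Real.rpow_nonneg (Real.log_nonneg hx) p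

theorem log_pow_four_max_rpow_le {r r₀ : ℝ} (hr : 1 ≤ r) (hr₀ : 1 ≤ r₀) (p : ℝ) :
    Real.log (max r r₀ ^ 4) ^ p ≤ Real.log (r ^ 4) ^ p + Real.log (r₀ ^ 4) ^ p := by
  rcases max_cases r r₀ with ⟨h, -⟩ | ⟨h, -⟩ <;> rw [h]
  · linarith [rpow_log_nonneg (one_le_pow₀ hr₀ (n := 4)) p]
  · linarith [rpow_log_nonneg (one_le_pow₀ hr (n := 4)) p]

theorem card_le_of_log_norm_le_add_log_rpow {f : ℂ → ℂ} {p B s : ℝ} (hp : 0 ≤ p) (hB : 0 ≤ B)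
    (hs : 2 * Real.exp 2 ^ 2 ≤ s) (hf : Differentiable ℂ f) (hf0 : f 0 = 1)
    (hgrowth : ∀ z : ℂ, 1 ≤ ‖z‖ → Real.log ‖f z‖ ≤ B + Real.log (2 * ‖z‖ ^ 2) ^ p)
    {ι : Type*} [Fintype ι] (zs : ι → ℂ) (hzs : ∀ i, ‖zs i‖ ≤ s)
    (hmult : ∀ w, #{i | zs i = w} ≤ (analyticOrderAt f w).toNat) :
    (Fintype.card ι : ℝ) ≤ (B + Real.log (s ^ 4) ^ p) / 2 := by
  have he2 : 2 < Real.exp 2 := by linarith [Real.add_one_le_exp (2 : ℝ)]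
  have hs1 : 1 ≤ s := by nlinarith
  have hR : 1 ≤ Real.exp 2 * s := by nlinarith
  have hR_sq : 1 ≤ 2 * (Real.exp 2 * s) ^ 2 := by nlinarith
  have hR_sq_le : 2 * (Real.exp 2 * s) ^ 2 ≤ s ^ 4 :=
    calc 2 * (Real.exp 2 * s) ^ 2 = 2 * Real.exp 2 ^ 2 * s ^ 2 := by ring
      _ ≤ s * s ^ 2 := by gcongr
      _ = s ^ 3 := by ring
      _ ≤ s ^ 4 := pow_le_pow_right₀ hs1 (by norm_num)
  have hbound : ∀ z : ℂ, ‖z‖ = Real.exp 2 * s → Real.log ‖f z‖ ≤ B + Real.log (s ^ 4) ^ p := by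
    intro z hz
    rw [← hz] at hR hR_sq hR_sq_le
    calc Real.log ‖f z‖ ≤ B + Real.log (2 * ‖z‖ ^ 2) ^ p := hgrowth z hR
      _ ≤ B + Real.log (s ^ 4) ^ p := by
        gcongr
        exact Real.log_nonneg hR_sq
  have hcount := card_le_div_log_of_log_norm_le (by linarith) (by nlinarith)
    (by linarith [rpow_log_nonneg (one_le_pow₀ hs1 (n := 4)) p]) (fun z _ => hf.analyticAt z) hf0
    hbound zs hzs hmult
  rwa [mul_div_cancel_right₀ _ (by positivity), Real.log_exp] at hcount

theorem zero_counting_bound (p B : ℝ) (hp : 1 ≤ p) (hB : 0 ≤ B) :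
    ∃ A₁ : ℝ, 0 ≤ A₁ ∧
      ∀ f : ℂ → ℂ, Differentiable ℂ f → f 0 = 1 →
        (∀ z : ℂ, 1 ≤ ‖z‖ →
          Real.log (‖f z‖) ≤ B + (Real.log (2 * ‖z‖ ^ 2)) ^ p) →
        ∀ r : ℝ, 1 ≤ r →
          ∀ (M : ℕ) (zs : Fin M → ℂ),
            (∀ n, ‖zs n‖ < r) →
            (∀ w : ℂ, ∃ m : ℕ,
              (Finset.univ.filter (fun n => zs n = w)).card ≤ m ∧ HasZeroOrder f w m) →
            (M : ℝ) ≤ A₁ + (Real.log (r ^ 4)) ^ p / 2 := by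
  set r₀ : ℝ := 2 * Real.exp 2 ^ 2
  have hr₀ : 1 ≤ r₀ := by nlinarith [Real.add_one_le_exp (2 : ℝ)]
  refine ⟨B / 2 + Real.log (r₀ ^ 4) ^ p / 2,
    by linarith [rpow_log_nonneg (one_le_pow₀ hr₀ (n := 4)) p], ?_⟩
  intro f hf hf0 hgrowth r hr M zs hzs hmult
  have hcount := card_le_of_log_norm_le_add_log_rpow (s := max r r₀) (by linarith) hB
    (le_max_right r r₀) hf hf0 hgrowth zs (fun n => (hzs n).le.trans (le_max_left r r₀))
    fun w => by
      obtain ⟨m, hcard, hord⟩ := hmult w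
      simpa [hord.analyticOrderAt_eq] using hcard
  rw [Fintype.card_fin] at hcount
  linarith [log_pow_four_max_rpow_le hr hr₀ p]
end

section
/- Let z ∈ ℂ with |z| = 1, and let (z_n)_{n≥1} and (z̆_n)_{n≥1} be sequences of complex numbers with |z_n| ≥ 2 and |z̆_n| ≥ 2 for all n, and with Σ_{n=1}^∞ 1/|z_n| < ∞ and Σ_{n=1}^∞ 1/|z̆_n| < ∞. Then the infinite product ∏_{n=1}^∞ (1 − z/z̆_n)/(1 − z/z_n) converges and exp(−s) ≤ ∏_{n=1}^∞ |(1 − z/z̆_n)/(1 − z/z_n)| ≤ exp(s), where s = 2·Σ_{n=1}^∞ (1/|z̆_n| + 1/|z_n|). -/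
open Complex Filter
open scoped ComplexConjugate Topology

/-! Each factor is `exp (log (1 - u) - log (1 - v))` with `u = z / z̆ₙ`, `v = z / zₙ` of norm at
most `1/2`, where `‖log (1 - w)‖ ≤ (3/2)‖w‖`. So the logarithms of the factors are summable with
total norm at most `s`, the product is the exponential of their sum, and its modulus
`exp (Re ∑ …)` lies between `exp (-s)` and `exp s`. -/

namespace Complex

variable {ι : Type*}

lemma norm_log_one_sub_le {u : ℂ} (hu : ‖u‖ ≤ 1 / 2) : ‖log (1 - u)‖ ≤ 3 / 2 * ‖u‖ := by
  simpa [sub_eq_add_neg] using norm_log_one_add_half_le_self (z := -u) (by rwa [norm_neg])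

lemma norm_log_one_sub_sub_log_one_sub_le {u v : ℂ} (hu : ‖u‖ ≤ 1 / 2) (hv : ‖v‖ ≤ 1 / 2) :
    ‖log (1 - u) - log (1 - v)‖ ≤ 2 * (‖u‖ + ‖v‖) :=
  calc ‖log (1 - u) - log (1 - v)‖ ≤ ‖log (1 - u)‖ + ‖log (1 - v)‖ := norm_sub_le _ _
    _ ≤ 3 / 2 * ‖u‖ + 3 / 2 * ‖v‖ := add_le_add (norm_log_one_sub_le hu) (norm_log_one_sub_le hv)
    _ ≤ 2 * (‖u‖ + ‖v‖) := by linarith [norm_nonneg u, norm_nonneg v]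

lemma abs_re_tsum_le {g : ι → ℂ} {c : ι → ℝ} (hg : ∀ i, ‖g i‖ ≤ c i) (hc : Summable c) :
    |(∑' i, g i).re| ≤ ∑' i, c i :=
  (abs_re_le_norm _).trans (tsum_of_norm_bounded hc.hasSum hg)

lemma hasProd_div_of_hasSum_log_sub {x y : ι → ℂ} {a : ℂ} (hx : ∀ i, x i ≠ 0)
    (hy : ∀ i, y i ≠ 0) (h : HasSum (fun i ↦ log (x i) - log (y i)) a) :
    HasProd (fun i ↦ x i / y i) (cexp a) := by
  simpa [Function.comp_def, exp_sub, exp_log (hx _), exp_log (hy _)] using h.cexp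

section OneSubDivOneSub

variable {u v : ι → ℂ}

lemma hasProd_one_sub_div_one_sub (hu : ∀ i, ‖u i‖ ≤ 1 / 2) (hv : ∀ i, ‖v i‖ ≤ 1 / 2)
    (hsu : Summable fun i ↦ ‖u i‖) (hsv : Summable fun i ↦ ‖v i‖) :
    HasProd (fun i ↦ (1 - u i) / (1 - v i))
      (cexp (∑' i, (log (1 - u i) - log (1 - v i)))) := by
  have hne (w : ℂ) (hw : ‖w‖ ≤ 1 / 2) : 1 - w ≠ 0 :=
    sub_ne_zero.2 fun h ↦ by norm_num [← h] at hw
  refine hasProd_div_of_hasSum_log_sub (fun i ↦ hne _ (hu i)) (fun i ↦ hne _ (hv i)) ?_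
  exact (((hsu.add hsv).mul_left 2).of_norm_bounded
    fun i ↦ norm_log_one_sub_sub_log_one_sub_le (hu i) (hv i)).hasSum

lemma norm_tprod_one_sub_div_one_sub_mem_Icc (hu : ∀ i, ‖u i‖ ≤ 1 / 2)
    (hv : ∀ i, ‖v i‖ ≤ 1 / 2) (hsu : Summable fun i ↦ ‖u i‖) (hsv : Summable fun i ↦ ‖v i‖) :
    ‖∏' i, (1 - u i) / (1 - v i)‖ ∈
      Set.Icc (Real.exp (-(2 * ∑' i, (‖u i‖ + ‖v i‖)))) (Real.exp (2 * ∑' i, (‖u i‖ + ‖v i‖))) := by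
  rw [(hasProd_one_sub_div_one_sub hu hv hsu hsv).tprod_eq, norm_exp, ← tsum_mul_left]
  have hre := abs_re_tsum_le (fun i ↦ norm_log_one_sub_sub_log_one_sub_le (hu i) (hv i))
    ((hsu.add hsv).mul_left 2)
  exact ⟨Real.exp_le_exp.2 (abs_le.1 hre).1, Real.exp_le_exp.2 (abs_le.1 hre).2⟩

end OneSubDivOneSub

end Complex

theorem large_resonance_product_estimate (z : ℂ) (hz : ‖z‖ = 1)
    (zs bzs : ℕ → ℂ)
    (hzs : ∀ n, 2 ≤ ‖zs n‖) (hbzs : ∀ n, 2 ≤ ‖bzs n‖)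
    (hsum : Summable (fun n : ℕ => (‖zs n‖)⁻¹))
    (hbsum : Summable (fun n : ℕ => (‖bzs n‖)⁻¹)) :
    Multipliable (fun n : ℕ => (1 - z / bzs n) / (1 - z / zs n)) ∧
    Real.exp (-(2 * ∑' n : ℕ, ((‖bzs n‖)⁻¹ + (‖zs n‖)⁻¹))) ≤
      ‖∏' n : ℕ, (1 - z / bzs n) / (1 - z / zs n)‖ ∧
    ‖∏' n : ℕ, (1 - z / bzs n) / (1 - z / zs n)‖ ≤
      Real.exp (2 * ∑' n : ℕ, ((‖bzs n‖)⁻¹ + (‖zs n‖)⁻¹)) := by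
  have hnorm (w : ℂ) : ‖z / w‖ = ‖w‖⁻¹ := by rw [norm_div, hz, one_div]
  have hhalf (w : ℂ) (hw : 2 ≤ ‖w‖) : ‖z / w‖ ≤ 1 / 2 := by
    rw [hnorm, one_div]
    exact inv_anti₀ two_pos hw
  have hbzs_half := fun n ↦ hhalf _ (hbzs n)
  have hzs_half := fun n ↦ hhalf _ (hzs n)
  have hsb : Summable fun n ↦ ‖z / bzs n‖ := by simpa only [hnorm] using hbsum
  have hsz : Summable fun n ↦ ‖z / zs n‖ := by simpa only [hnorm] using hsum
  have hbounds := norm_tprod_one_sub_div_one_sub_mem_Icc hbzs_half hzs_half hsb hsz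
  simp only [hnorm] at hbounds
  exact ⟨(hasProd_one_sub_div_one_sub hbzs_half hzs_half hsb hsz).multipliable, hbounds⟩
end

section
/- Let Q ≥ 1 and let w, w̆, z, z̆ ∈ ℂ satisfy |w| ≤ 1 − 1/Q, |w̆| ≤ 1 − 1/Q, |z| ≤ 1 and |z̆| ≤ 1. Then |S(w,z) − S(w̆,z̆)| ≤ Q²·(4|w − w̆| + 2|z − z̆|), where S(w,z) = (z + conj(w))/(1 + wz). -/
open Complex Filter
open scoped ComplexConjugate Topology

/-! The denominators satisfy `|1 + wz| ≥ 1 - |w||z| ≥ 1/Q`, and after clearing them the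
numerator `(z + w̄)(1 + w'z') - (1 + wz)(z' + w̄')` is a sum of six terms, each a product of
factors of norm at most one with one of the differences `w - w'`, `w̄ - w̄'`, `z - z'`. -/

theorem norm_mul_mul_le_of_norm_le_one {R : Type*} [SeminormedRing R] {a b : R} (c : R)
    (ha : ‖a‖ ≤ 1) (hb : ‖b‖ ≤ 1) : ‖a * b * c‖ ≤ ‖c‖ :=
  calc ‖a * b * c‖ ≤ ‖a‖ * ‖b‖ * ‖c‖ := norm_mul₃_le
    _ ≤ 1 * 1 * ‖c‖ := by gcongr
    _ = ‖c‖ := by ring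

theorem one_sub_norm_mul_norm_le_norm_one_add_mul {R : Type*} [SeminormedRing R] [NormOneClass R]
    (u v : R) : 1 - ‖u‖ * ‖v‖ ≤ ‖1 + u * v‖ := by
  have h := norm_sub_le (1 + u * v) (u * v)
  rw [add_sub_cancel_right, norm_one] at h
  linarith [norm_mul_le u v]

theorem le_norm_one_add_mul_of_norm_le_one_sub {R : Type*} [SeminormedRing R] [NormOneClass R]
    {r : ℝ} {u v : R} (hu : ‖u‖ ≤ 1 - r) (hv : ‖v‖ ≤ 1) : r ≤ ‖1 + u * v‖ := by
  have huv : ‖u‖ * ‖v‖ ≤ 1 - r := (mul_le_of_le_one_right (norm_nonneg u) hv).trans hu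
  linarith [one_sub_norm_mul_norm_le_norm_one_add_mul u v]

theorem norm_moebius_cross_sub_le {w w' z z' : ℂ} (hw : ‖w‖ ≤ 1) (hw' : ‖w'‖ ≤ 1)
    (hz : ‖z‖ ≤ 1) (hz' : ‖z'‖ ≤ 1) :
    ‖(z + conj w) * (1 + w' * z') - (1 + w * z) * (z' + conj w')‖ ≤
      4 * ‖w - w'‖ + 2 * ‖z - z'‖ := by
  have hcw : ‖conj w‖ ≤ 1 := by rwa [norm_conj]
  have hcw' : ‖conj w'‖ ≤ 1 := by rwa [norm_conj]
  calc ‖(z + conj w) * (1 + w' * z') - (1 + w * z) * (z' + conj w')‖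
      = ‖(z - z') + conj (w - w') + z * z' * (w' - w) + conj w * z' * (w' - w)
          + w * z' * conj (w - w') + conj w' * w * (z' - z)‖ := by
        rw [map_sub]; congr 1; ring
    _ ≤ ‖z - z'‖ + ‖conj (w - w')‖ + ‖z * z' * (w' - w)‖ + ‖conj w * z' * (w' - w)‖
          + ‖w * z' * conj (w - w')‖ + ‖conj w' * w * (z' - z)‖ := by
        repeat grw [norm_add_le]
    _ ≤ ‖z - z'‖ + ‖conj (w - w')‖ + ‖w' - w‖ + ‖w' - w‖ + ‖conj (w - w')‖ + ‖z' - z‖ := by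
        grw [norm_mul_mul_le_of_norm_le_one _ hz hz', norm_mul_mul_le_of_norm_le_one _ hcw hz',
          norm_mul_mul_le_of_norm_le_one _ hw hz', norm_mul_mul_le_of_norm_le_one _ hcw' hw]
    _ = 4 * ‖w - w'‖ + 2 * ‖z - z'‖ := by
        rw [norm_conj, norm_sub_rev w', norm_sub_rev z']; ring

theorem moebius_transform_lipschitz (Q : ℝ) (hQ : 1 ≤ Q) (w w' z z' : ℂ)
    (hw : ‖w‖ ≤ 1 - 1 / Q) (hw' : ‖w'‖ ≤ 1 - 1 / Q)
    (hz : ‖z‖ ≤ 1) (hz' : ‖z'‖ ≤ 1) :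
    ‖(z + conj w) / (1 + w * z) - (z' + conj w') / (1 + w' * z')‖ ≤
      Q ^ 2 * (4 * ‖w - w'‖ + 2 * ‖z - z'‖) := by
  have hQ0 : 0 < Q := one_pos.trans_le hQ
  have hw1 : ‖w‖ ≤ 1 := hw.trans (by simp [hQ0.le])
  have hw1' : ‖w'‖ ≤ 1 := hw'.trans (by simp [hQ0.le])
  have hD := le_norm_one_add_mul_of_norm_le_one_sub hw hz
  have hD' := le_norm_one_add_mul_of_norm_le_one_sub hw' hz'
  have hD0 : 1 + w * z ≠ 0 := norm_pos_iff.mp ((one_div_pos.mpr hQ0).trans_le hD)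
  have hD0' : 1 + w' * z' ≠ 0 := norm_pos_iff.mp ((one_div_pos.mpr hQ0).trans_le hD')
  rw [div_sub_div _ _ hD0 hD0', norm_div, norm_mul]
  calc _ ≤ (4 * ‖w - w'‖ + 2 * ‖z - z'‖) / (1 / Q * (1 / Q)) := by
        gcongr
        exact norm_moebius_cross_sub_le hw1 hw1' hz hz'
    _ = Q ^ 2 * (4 * ‖w - w'‖ + 2 * ‖z - z'‖) := by field_simp
end

section
/- Let z ∈ ℂ with |z| ≤ 1, let (α_k)_{k≥1} be a sequence of complex numbers with |α_k| < 1 for all k and Σ_{k=1}^∞ |α_k| < ∞, and let (w_k)_{k≥0} be a sequence of complex numbers with |w_k| < 1 for all k, satisfying the Schur recursion z·w_k = (w_{k−1} + conj(α_k))/(1 + α_k·w_{k−1}) for all k ≥ 1, and such that w_k → 0 as k → ∞. Then (1 + |w_0|)/(1 − |w_0|) ≤ ∏_{k=1}^∞ (1 + |α_k|)/(1 − |α_k|), where the infinite product converges by the summability of |α_k|. -/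
open Complex Filter
open scoped ComplexConjugate Topology

/-!
Inverting the Schur step gives `w_{k-1} = (v - ᾱ_k) / (1 - α_k v)` with `v = z w_k`, so by the
triangle inequality for the hyperbolic distance `d` of the disk,
`d(0, w_{k-1}) ≤ d(0, α_k) + d(0, z w_k) ≤ d(0, α_k) + d(0, w_k)`. Since
`exp d(0, r) = (1 + r) / (1 - r)`, this is a multiplicative one-step bound; telescoping it and
letting `w_k → 0` yields the estimate.
-/

open Asymptotics

/-- `(1 + r) / (1 - r) = exp d(0, r)` for the Poincaré distance `d` on the unit disk. -/
noncomputable def poincareRatio (r : ℝ) : ℝ := (1 + r) / (1 - r)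

lemma poincareRatio_le_poincareRatio {x y : ℝ} (hxy : x ≤ y) (hy : y < 1) :
    poincareRatio x ≤ poincareRatio y := by
  unfold poincareRatio
  rw [div_le_div_iff₀ (by linarith) (by linarith)]
  nlinarith

lemma poincareRatio_nonneg {r : ℝ} (h0 : 0 ≤ r) (h1 : r < 1) : 0 ≤ poincareRatio r :=
  div_nonneg (by linarith) (by linarith)

/-- Relativistic velocity addition `(a, c) ↦ (a + c) / (1 + a c)` is addition of hyperbolic
distances. -/
lemma poincareRatio_add_div_one_add_mul {a c : ℝ} (hac : 1 + a * c ≠ 0) :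
    poincareRatio ((a + c) / (1 + a * c)) = poincareRatio a * poincareRatio c := by
  unfold poincareRatio
  rw [one_add_div hac, one_sub_div hac, div_div_div_cancel_right₀ hac, div_mul_div_comm]
  congr 1 <;> ring

lemma poincareRatio_eq_one_add {r : ℝ} (hr : r ≠ 1) :
    poincareRatio r = 1 + 2 * r / (1 - r) := by
  have : 1 - r ≠ 0 := sub_ne_zero.2 (Ne.symm hr)
  unfold poincareRatio
  field_simp
  ring

lemma multipliable_poincareRatio {x : ℕ → ℝ} (hx1 : ∀ k, x k < 1) (hx : Summable x) :
    Multipliable fun k ↦ poincareRatio (x k) := by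
  have hbigO : (fun k ↦ 2 * x k / (1 - x k)) =O[atTop] x := by
    have hlim : Tendsto (fun k ↦ 2 / (1 - x k)) atTop (𝓝 (2 / (1 - 0))) :=
      tendsto_const_nhds.div (tendsto_const_nhds.sub hx.tendsto_atTop_zero) (by norm_num)
    have := (isBigO_refl x atTop).mul (hlim.isBigO_one ℝ)
    simp only [mul_one] at this
    refine this.congr_left fun k ↦ ?_
    ring
  simpa only [poincareRatio_eq_one_add (hx1 _).ne] using
    Real.multipliable_one_add_of_summable (summable_of_isBigO_nat hx hbigO)

lemma norm_one_sub_mul_sq (v a : ℂ) :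
    ‖1 - a * v‖ ^ 2 = ‖v - conj a‖ ^ 2 + (1 - ‖v‖ ^ 2) * (1 - ‖a‖ ^ 2) := by
  simp only [Complex.sq_norm, Complex.normSq_apply]
  simp
  ring

/-- The left side is the pseudo-hyperbolic distance between `v` and `ā`, so this is the
triangle inequality through `0`. -/
lemma norm_sub_conj_div_one_sub_mul_le {v a : ℂ} (hv : ‖v‖ < 1) (ha : ‖a‖ < 1) :
    ‖(v - conj a) / (1 - a * v)‖ ≤ (‖v‖ + ‖a‖) / (1 + ‖v‖ * ‖a‖) := by
  have hav : ‖a * v‖ < 1 := by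
    rw [norm_mul]; nlinarith [norm_nonneg a, norm_nonneg v]
  have hden : 0 < ‖1 - a * v‖ := by
    linarith [norm_sub_norm_le (1 : ℂ) (a * v), norm_one (α := ℂ)]
  have htri : ‖v - conj a‖ ≤ ‖v‖ + ‖a‖ := by
    simpa using norm_sub_le v (conj a)
  have hP : 0 ≤ (1 - ‖v‖ ^ 2) * (1 - ‖a‖ ^ 2) := by
    apply mul_nonneg <;> nlinarith [norm_nonneg v, norm_nonneg a]
  have hsq : ‖v - conj a‖ ^ 2 ≤ (‖v‖ + ‖a‖) ^ 2 := pow_le_pow_left₀ (norm_nonneg _) htri 2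
  rw [norm_div, div_le_div_iff₀ hden (by positivity)]
  refine (pow_le_pow_iff_left₀ (by positivity) (by positivity) two_ne_zero).mp ?_
  -- `(1 + ‖v‖‖a‖)² = (‖v‖ + ‖a‖)² + P` and `‖1 - a v‖² = ‖v - ā‖² + P` with the same `P ≥ 0`
  rw [mul_pow, mul_pow, norm_one_sub_mul_sq]
  nlinarith [mul_le_mul_of_nonneg_right hsq hP]

lemma poincareRatio_le_mul_of_schur_step {u v a : ℂ} (hu : ‖u‖ < 1) (hv : ‖v‖ < 1)
    (ha : ‖a‖ < 1) (h : v = (u + conj a) / (1 + a * u)) :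
    poincareRatio ‖u‖ ≤ poincareRatio ‖a‖ * poincareRatio ‖v‖ := by
  have one_add_mul_ne_zero : ∀ {x : ℂ}, ‖x‖ < 1 → 1 + a * x ≠ 0 := by
    intro x hx h0
    have : ‖a * x‖ = 1 := by rw [show a * x = -1 by linear_combination h0]; simp
    rw [norm_mul] at this
    nlinarith [norm_nonneg a, norm_nonneg x]
  have hv' : 1 - a * v ≠ 0 := by
    simpa [sub_eq_add_neg] using one_add_mul_ne_zero (x := -v) (by simpa using hv)
  have hu_eq : u = (v - conj a) / (1 - a * v) := by
    rw [eq_div_iff hv']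
    rw [eq_div_iff (one_add_mul_ne_zero hu)] at h
    linear_combination -h
  have hq : (‖v‖ + ‖a‖) / (1 + ‖v‖ * ‖a‖) < 1 := by
    rw [div_lt_one (by positivity)]
    nlinarith [norm_nonneg v, norm_nonneg a]
  calc poincareRatio ‖u‖
      ≤ poincareRatio ((‖v‖ + ‖a‖) / (1 + ‖v‖ * ‖a‖)) :=
        poincareRatio_le_poincareRatio (hu_eq ▸ norm_sub_conj_div_one_sub_mul_le hv ha) hq
    _ = poincareRatio ‖a‖ * poincareRatio ‖v‖ := by
        rw [poincareRatio_add_div_one_add_mul (by positivity), mul_comm]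

lemma le_tprod_mul_of_le_mul_succ {f g : ℕ → ℝ} {L : ℝ} (hf : ∀ n, 0 ≤ f n)
    (hstep : ∀ n, g n ≤ f n * g (n + 1)) (hfm : Multipliable f)
    (hg : Tendsto g atTop (𝓝 L)) :
    g 0 ≤ (∏' n, f n) * L := by
  have hpartial : ∀ n, g 0 ≤ (∏ i ∈ Finset.range n, f i) * g n := by
    intro n
    induction n with
    | zero => simp
    | succ n ih =>
      calc g 0 ≤ (∏ i ∈ Finset.range n, f i) * g n := ih
        _ ≤ (∏ i ∈ Finset.range n, f i) * (f n * g (n + 1)) :=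
          mul_le_mul_of_nonneg_left (hstep n) (Finset.prod_nonneg fun i _ ↦ hf i)
        _ = (∏ i ∈ Finset.range (n + 1), f i) * g (n + 1) := by
          rw [Finset.prod_range_succ, mul_assoc]
  exact ge_of_tendsto (hfm.hasProd.tendsto_prod_nat.mul hg) (Eventually.of_forall hpartial)

theorem schur_recursion_estimate (z : ℂ) (hz : ‖z‖ ≤ 1)
    (α : ℕ → ℂ) (hα1 : ∀ k : ℕ, 1 ≤ k → ‖α k‖ < 1)
    (hsum : Summable (fun k : ℕ => ‖α (k + 1)‖))
    (w : ℕ → ℂ) (hw : ∀ k : ℕ, ‖w k‖ < 1)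
    (hrec : ∀ k : ℕ, 1 ≤ k →
      z * w k = (w (k - 1) + conj (α k)) / (1 + α k * w (k - 1)))
    (hlim : Filter.Tendsto w Filter.atTop (nhds 0)) :
    (1 + ‖w 0‖) / (1 - ‖w 0‖) ≤
      ∏' k : ℕ, (1 + ‖α (k + 1)‖) / (1 - ‖α (k + 1)‖) := by
  have hα : ∀ k, ‖α (k + 1)‖ < 1 := fun k ↦ hα1 (k + 1) k.succ_pos
  have hstep (n : ℕ) :
      poincareRatio ‖w n‖ ≤ poincareRatio ‖α (n + 1)‖ * poincareRatio ‖w (n + 1)‖ := by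
    have hzw : ‖z * w (n + 1)‖ ≤ ‖w (n + 1)‖ := by
      rw [norm_mul]; exact mul_le_of_le_one_left (norm_nonneg _) hz
    calc poincareRatio ‖w n‖
        ≤ poincareRatio ‖α (n + 1)‖ * poincareRatio ‖z * w (n + 1)‖ :=
          poincareRatio_le_mul_of_schur_step (hw n) (hzw.trans_lt (hw _)) (hα n)
            (by simpa using hrec (n + 1) n.succ_pos)
      _ ≤ poincareRatio ‖α (n + 1)‖ * poincareRatio ‖w (n + 1)‖ :=
          mul_le_mul_of_nonneg_left (poincareRatio_le_poincareRatio hzw (hw _))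
            (poincareRatio_nonneg (norm_nonneg _) (hα n))
  have hφ : Tendsto (fun n ↦ poincareRatio ‖w n‖) atTop (𝓝 1) := by
    have hcont : ContinuousAt poincareRatio 0 := by
      unfold poincareRatio; fun_prop (disch := norm_num)
    have := hcont.tendsto.comp (by simpa using hlim.norm)
    rwa [show poincareRatio 0 = 1 by norm_num [poincareRatio]] at this
  have := le_tprod_mul_of_le_mul_succ
    (fun n ↦ poincareRatio_nonneg (norm_nonneg _) (hα n)) hstep
    (multipliable_poincareRatio hα hsum) hφ
  rw [mul_one] at this
  exact this
end
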